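/- Boundedness of the LTC neuron state: if x: [0,∞) → ℝ satisfies dx/dt = -(1/τ + f(t))·x + f(t)·A with τ > 0, f(t) ∈ [0, M] for all t, A ∈ ℝ, and x(0) ∈ [min(0,A), max(0,A)], then x(t) ∈ [min(0,A), max(0,A)] for all t ≥ 0. -/

import Mathlib

/-!
With `G` an antiderivative of `1/τ + f`, the deviation `x - c` from any level `c ≥ max 0 A`
satisfies `(x - c)' ≤ -G' (x - c)`, so `(x - c) e^G` is nonincreasing and `x` never rises above
`c`. Since `x ↦ -x`, `A ↦ -A` preserves the equation, the same argument bounds `x` from below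
by `min 0 A`.
-/

open Set

theorem antitoneOn_mul_exp_of_deriv_le_neg_mul {y y' g G : ℝ → ℝ} {a : ℝ}
    (hG : ∀ t ≥ a, HasDerivAt G (g t) t) (hy : ∀ t ≥ a, HasDerivAt y (y' t) t)
    (hle : ∀ t ≥ a, y' t ≤ -g t * y t) :
    AntitoneOn (fun t => y t * Real.exp (G t)) (Ici a) := by
  have hw : ∀ t ≥ a, HasDerivAt (fun t => y t * Real.exp (G t))
      ((y' t + g t * y t) * Real.exp (G t)) t := fun t ht =>
    ((hy t ht).mul (hG t ht).exp).congr_deriv (by ring)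
  refine antitoneOn_of_hasDerivWithinAt_nonpos (convex_Ici a)
    (f' := fun t => (y' t + g t * y t) * Real.exp (G t))
    (fun t ht => (hw t ht).continuousAt.continuousWithinAt) (fun t ht => ?_) (fun t ht => ?_)
  all_goals rw [interior_Ici] at ht
  · exact (hw t ht.le).hasDerivWithinAt
  · exact mul_nonpos_of_nonpos_of_nonneg (by linarith [hle t ht.le]) (Real.exp_pos _).le

theorem nonpos_of_deriv_le_neg_mul {y y' g G : ℝ → ℝ} {a : ℝ}
    (hG : ∀ t ≥ a, HasDerivAt G (g t) t) (hy : ∀ t ≥ a, HasDerivAt y (y' t) t)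
    (hle : ∀ t ≥ a, y' t ≤ -g t * y t) (ha : y a ≤ 0) :
    ∀ t ≥ a, y t ≤ 0 := by
  intro t ht
  have hmono : y t * Real.exp (G t) ≤ y a * Real.exp (G a) :=
    antitoneOn_mul_exp_of_deriv_le_neg_mul hG hy hle self_mem_Ici ht ht
  have hya : y a * Real.exp (G a) ≤ 0 := mul_nonpos_of_nonpos_of_nonneg ha (Real.exp_pos _).le
  exact nonpos_of_mul_nonpos_left (hmono.trans hya) (Real.exp_pos _)

theorem ltc_le_of_le {τ A c : ℝ} {f x : ℝ → ℝ} (hτ : 0 < τ) (hfcont : Continuous f)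
    (hf : ∀ t, 0 ≤ f t) (hx : ∀ t ≥ (0:ℝ), HasDerivAt x (-(1/τ + f t) * x t + f t * A) t)
    (hc : 0 ≤ c) (hAc : A ≤ c) (h0 : x 0 ≤ c) :
    ∀ t ≥ (0:ℝ), x t ≤ c := by
  have hG : ∀ t, HasDerivAt (fun s => s / τ + ∫ u in (0:ℝ)..s, f u) (1/τ + f t) t := fun t =>
    ((hasDerivAt_id t).div_const τ).add (hfcont.integral_hasStrictDerivAt 0 t).hasDerivAt
  have hle : ∀ t ≥ (0:ℝ),
      -(1/τ + f t) * x t + f t * A ≤ -(1/τ + f t) * (x t - c) := fun t _ => by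
    have : 0 ≤ c / τ + f t * (c - A) :=
      add_nonneg (div_nonneg hc hτ.le) (mul_nonneg (hf t) (sub_nonneg.2 hAc))
    linarith [show (1/τ + f t) * c = c / τ + f t * c by ring]
  intro t ht
  exact sub_nonpos.1 <| nonpos_of_deriv_le_neg_mul (fun t _ => hG t)
    (fun t ht => (hx t ht).sub_const c) hle (sub_nonpos.2 h0) t ht

theorem ltc_state_bounded (τ A M : ℝ) (f : ℝ → ℝ) (x : ℝ → ℝ)
    (hτ : 0 < τ) (hfcont : Continuous f)
    (hf : ∀ t, f t ∈ Set.Icc (0:ℝ) M)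
    (hx : ∀ t ≥ (0:ℝ), HasDerivAt x (-(1/τ + f t) * x t + f t * A) t)
    (h0 : x 0 ∈ Set.Icc (min 0 A) (max 0 A)) :
    ∀ t ≥ (0:ℝ), x t ∈ Set.Icc (min 0 A) (max 0 A) := by
  have hf₀ : ∀ t, 0 ≤ f t := fun t => (hf t).1
  have hnegx : ∀ t ≥ (0:ℝ), HasDerivAt (fun s => -x s) (-(1/τ + f t) * -x t + f t * -A) t :=
    fun t ht => (hx t ht).neg.congr_deriv (by ring)
  intro t ht
  constructor
  · have := ltc_le_of_le hτ hfcont hf₀ hnegx (neg_nonneg.2 (min_le_left 0 A))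
      (neg_le_neg (min_le_right 0 A)) (neg_le_neg h0.1) t ht
    linarith
  · exact ltc_le_of_le hτ hfcont hf₀ hx (le_max_left 0 A) (le_max_right 0 A) h0.2 t ht
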